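/- Let A be a finite nonempty set, let π₀ : A → ℝ satisfy π₀(a) > 0 for all a ∈ A and ∑_{a∈A} π₀(a) = 1, let n ≥ 1, and let Q^(1), …, Q^(n) : A → ℝ be such that at least one Q^(i) is non-constant. Then there is at most one w ∈ (0, ∞) satisfying the matching equation (1/n)·∑_{i=1}^{n} w·log(∑_{a∈A} π₀(a)·exp(Q^(i)(a)/w)) = max_{a∈A} (1/n)·∑_{i=1}^{n} Q^(i)(a), i.e., the unbiased temperature, if it exists, is unique. -/

import Mathlib

/-!
At temperature `w` the mellowmax of `q` is the logarithm of the power mean of order `1 / w` of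
`exp ∘ q` under the probability weights `π₀`. Power means increase with the order (Jensen's
inequality for `t ↦ t ^ (w / v)`, `v < w`), strictly unless the function is constant. So every
mellowmax is nonincreasing in the temperature, and the ensemble average is strictly decreasing as
soon as one member is non-constant; it therefore meets any fixed level at most once.
-/

open Real Finset Set

noncomputable def mellowmax {A : Type*} [Fintype A] (π₀ q : A → ℝ) (w : ℝ) : ℝ :=
  w * log (∑ a, π₀ a * exp (q a / w))

section Mellowmax

variable {A : Type*} [Fintype A] {π₀ : A → ℝ} (q : A → ℝ) {v w : ℝ}

lemma exp_div_rpow_div (x : ℝ) (hv : 0 < v) (hw : 0 < w) :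
    exp (x / w) ^ (w / v) = exp (x / v) := by
  rw [← exp_mul]
  congr 1
  field_simp

lemma sum_mul_exp_div_rpow (hv : 0 < v) (hw : 0 < w) :
    ∑ a, π₀ a * exp (q a / w) ^ (w / v) = ∑ a, π₀ a * exp (q a / v) := by
  simp only [exp_div_rpow_div _ hv hw]

variable [Nonempty A]

lemma sum_mul_exp_div_pos (hπ : ∀ a, 0 < π₀ a) (w : ℝ) : 0 < ∑ a, π₀ a * exp (q a / w) :=
  sum_pos (fun a _ => mul_pos (hπ a) (exp_pos _)) univ_nonempty

lemma mellowmax_eq_mul_log_rpow (hπ : ∀ a, 0 < π₀ a) (hv : 0 < v) (hw : 0 < w) :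
    mellowmax π₀ q w = v * log ((∑ a, π₀ a * exp (q a / w)) ^ (w / v)) := by
  rw [mellowmax, log_rpow (sum_mul_exp_div_pos q hπ w)]
  field_simp

theorem mellowmax_antitoneOn (hπ : ∀ a, 0 < π₀ a) (hπsum : ∑ a, π₀ a = 1) :
    AntitoneOn (mellowmax π₀ q) (Ioi 0) := by
  intro v (hv : 0 < v) w (hw : 0 < w) hvw
  have jensen := (convexOn_rpow ((one_le_div hv).2 hvw)).map_sum_le (t := univ) (w := π₀)
    (p := fun a => exp (q a / w)) (fun a _ => (hπ a).le) hπsum (fun a _ => (exp_pos _).le)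
  simp only [smul_eq_mul, sum_mul_exp_div_rpow q hv hw] at jensen
  rw [mellowmax_eq_mul_log_rpow q hπ hv hw, mellowmax]
  gcongr
  exact rpow_pos_of_pos (sum_mul_exp_div_pos q hπ w) _

theorem mellowmax_strictAntiOn (hπ : ∀ a, 0 < π₀ a) (hπsum : ∑ a, π₀ a = 1)
    (hq : ∃ a b, q a ≠ q b) :
    StrictAntiOn (mellowmax π₀ q) (Ioi 0) := by
  intro v (hv : 0 < v) w (hw : 0 < w) hvw
  obtain ⟨a, b, hab⟩ := hq
  have hne : exp (q a / w) ≠ exp (q b / w) := by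
    rwa [Ne, exp_eq_exp, div_left_inj' hw.ne']
  have jensen := (strictConvexOn_rpow ((one_lt_div hv).2 hvw)).map_sum_lt (t := univ) (w := π₀)
    (p := fun a => exp (q a / w)) (fun a _ => hπ a) hπsum (fun a _ => (exp_pos _).le)
    ⟨a, mem_univ a, b, mem_univ b, hne⟩
  simp only [smul_eq_mul, sum_mul_exp_div_rpow q hv hw] at jensen
  rw [mellowmax_eq_mul_log_rpow q hπ hv hw, mellowmax]
  gcongr
  exact rpow_pos_of_pos (sum_mul_exp_div_pos q hπ w) _

theorem sum_mellowmax_strictAntiOn {ι : Type*} [Fintype ι] (hπ : ∀ a, 0 < π₀ a)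
    (hπsum : ∑ a, π₀ a = 1) (Q : ι → A → ℝ) (hQ : ∃ i, ∃ a b, Q i a ≠ Q i b) :
    StrictAntiOn (fun w => ∑ i, mellowmax π₀ (Q i) w) (Ioi 0) := by
  intro v hv w hw hvw
  obtain ⟨i₀, hi₀⟩ := hQ
  exact sum_lt_sum (fun i _ => mellowmax_antitoneOn (Q i) hπ hπsum hv hw hvw.le)
    ⟨i₀, mem_univ i₀, mellowmax_strictAntiOn (Q i₀) hπ hπsum hi₀ hv hw hvw⟩

end Mellowmax

theorem unbiased_temperature_unique_general
    {A : Type*} [Fintype A] [Nonempty A]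
    (π₀ : A → ℝ) (hπpos : ∀ a, 0 < π₀ a) (hπsum : ∑ a, π₀ a = 1)
    (n : ℕ) (Q : Fin n → A → ℝ)
    (hQ : ∃ i : Fin n, ∃ a b : A, Q i a ≠ Q i b)
    (w₁ w₂ : ℝ) (hw₁ : 0 < w₁) (hw₂ : 0 < w₂)
    (h₁ : (1 / (n : ℝ)) * ∑ i, w₁ * Real.log (∑ a, π₀ a * Real.exp (Q i a / w₁)) =
      Finset.univ.sup' Finset.univ_nonempty
        (fun a => (1 / (n : ℝ)) * ∑ i, Q i a))
    (h₂ : (1 / (n : ℝ)) * ∑ i, w₂ * Real.log (∑ a, π₀ a * Real.exp (Q i a / w₂)) =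
      Finset.univ.sup' Finset.univ_nonempty
        (fun a => (1 / (n : ℝ)) * ∑ i, Q i a)) :
    w₁ = w₂ := by
  have hn : (1 / (n : ℝ)) ≠ 0 := by
    obtain ⟨i, -⟩ := hQ
    exact one_div_ne_zero (Nat.cast_ne_zero.2 i.pos.ne')
  exact (sum_mellowmax_strictAntiOn hπpos hπsum Q hQ).injOn hw₁ hw₂
    (mul_left_cancel₀ hn (h₁.trans h₂.symm))

/-- If at least one ensemble member is non-constant, the unbiased
(matching) temperature is unique if it exists. -/
theorem unbiased_temperature_unique
    {A : Type*} [Fintype A] [Nonempty A]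
    (π₀ : A → ℝ) (hπpos : ∀ a, 0 < π₀ a) (hπsum : ∑ a, π₀ a = 1)
    (n : ℕ) (hn : 1 ≤ n) (Q : Fin n → A → ℝ)
    (hQ : ∃ i : Fin n, ∃ a b : A, Q i a ≠ Q i b)
    (w₁ w₂ : ℝ) (hw₁ : 0 < w₁) (hw₂ : 0 < w₂)
    (h₁ : (1 / (n : ℝ)) * ∑ i, w₁ * Real.log (∑ a, π₀ a * Real.exp (Q i a / w₁)) =
      Finset.univ.sup' Finset.univ_nonempty
        (fun a => (1 / (n : ℝ)) * ∑ i, Q i a))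
    (h₂ : (1 / (n : ℝ)) * ∑ i, w₂ * Real.log (∑ a, π₀ a * Real.exp (Q i a / w₂)) =
      Finset.univ.sup' Finset.univ_nonempty
        (fun a => (1 / (n : ℝ)) * ∑ i, Q i a)) :
    w₁ = w₂ :=
  unbiased_temperature_unique_general π₀ hπpos hπsum n Q hQ w₁ w₂ hw₁ hw₂ h₁ h₂
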